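/- arXiv:2001.10821 — 6 statements merged into one kernel-verified Lean document; each statement's English description precedes it below -/
import Mathlib

section
/- Let V be a finite set, s ∈ V, E ⊆ V × V, k ∈ ℕ, ℓ : E → {0, …, k} a level function, and w_M, W_M : {0, …, k} → ℕ functions with 1 ≤ w_M(i) ≤ W_M(i) for all i. For x ∈ ℕ and level i, let ⌈x⌉_i denote the least natural number that is at least x + w_M(i) and divisible by 1 + W_M(i) − w_M(i). For a weight function w : E → ℕ, let d_w(s, u) denote the minimum total w-weight of a walk in (V, E) from s to u (∞ if u is not reachable from s). Then there exists a weight function w : E → ℕ such that for every edge (u, v) ∈ E whose tail u is reachable from s, w(u, v) = ⌈d_w(s, u)⌉_{ℓ(u,v)} − d_w(s, u); any two weight functions with this property agree on all edges whose tail is reachable from s; and every such edge e satisfies w_M(ℓ(e)) ≤ w(e) ≤ W_M(ℓ(e)). -/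
variable {V : Type*}

/-- Unweighted walk distance in the digraph with edge relation `E`:
the minimum number of edges of a walk from `u` to `v`, `∞` if none exists. -/
noncomputable def ddist (E : V → V → Prop) (u v : V) : ℕ∞ :=
  sInf { n : ℕ∞ | ∃ l : List V, l.Chain' E ∧ l.head? = some u ∧ l.getLast? = some v ∧
    n = ((l.length - 1 : ℕ) : ℕ∞) }

/-- Weighted walk distance: the minimum total weight of a walk from `u` to `v`. -/
noncomputable def wdist (E : V → V → Prop) (w : V → V → ℕ) (u v : V) : ℕ∞ :=
  sInf { n : ℕ∞ | ∃ l : List V, l.Chain' E ∧ l.head? = some u ∧ l.getLast? = some v ∧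
    n = ((((l.zip l.tail).map fun p => w p.1 p.2).sum : ℕ) : ℕ∞) }

/-- The digraph `H ∖ E(S)`: edges of `E` with neither endpoint in `S`. -/
def edgesAvoiding (E : V → V → Prop) (S : Set V) : V → V → Prop :=
  fun a b => E a b ∧ a ∉ S ∧ b ∉ S

/-- The strongly connected component of `v`: vertices mutually reachable with `v`. -/
def scc (E : V → V → Prop) (v : V) : Set V :=
  {u | Relation.ReflTransGen E u v ∧ Relation.ReflTransGen E v u}

/-- `S` is a `q`-quality separator: every SCC of `H ∖ E(S)` has at most `|V| - q·|S|` vertices. -/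
def QualSep [Fintype V] (E : V → V → Prop) (q : ℝ) (S : Set V) : Prop :=
  ∀ v : V, ((scc (edgesAvoiding E S) v).ncard : ℝ) ≤ (Fintype.card V : ℝ) - q * S.ncard

/-- Edge relation of the induced subdigraph on `C`. -/
def induced (E : V → V → Prop) (C : Set V) : V → V → Prop :=
  fun a b => E a b ∧ a ∈ C ∧ b ∈ C

/-- The (finite) collection of vertex sets of the SCCs of the digraph. -/
noncomputable def sccs [Fintype V] (E : V → V → Prop) : Finset (Set V) :=
  letI := Classical.decEq (Set V)
  Finset.image (fun v => scc E v) Finset.univ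

/-- The least natural number that is at least `x + w` and divisible by `1 + W - w`. -/
noncomputable def ceilTo (w W x : ℕ) : ℕ := sInf {n : ℕ | x + w ≤ n ∧ (1 + W - w) ∣ n}

/-- `w` is a flexible weight function: on every edge `(u, v)` whose tail `u` is reachable
from `s`, it satisfies `w (u, v) = ⌈d_w(s, u)⌉_{ℓ (u, v)} - d_w(s, u)`. -/
def FlexWeight {V : Type*} (s : V) (E : Set (V × V)) (ℓ : V × V → ℕ)
    (wM WM : ℕ → ℕ) (w : V × V → ℕ) : Prop :=
  ∀ e ∈ E, Relation.ReflTransGen (fun a b => (a, b) ∈ E) s e.1 →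
    ∃ m : ℕ, wdist (fun a b => (a, b) ∈ E) (fun a b => w (a, b)) s e.1 = (m : ℕ∞) ∧
      w e = ceilTo (wM (ℓ e)) (WM (ℓ e)) m - m

/-!
Write `f_e(m) = ⌈m⌉_{ℓ e}`; on edges of `E` it is monotone with `m < f_e(m)`. Generalise walk
lengths to walk costs: the cost of a walk is obtained from `0` by applying `f_e` for each of its
edges in turn, and `D_f(v)` is the least cost of a walk from `s` to `v`. If two such cost functions
`F`, `G` agree at `D_F` on every reachable edge, strong induction on `D_G(v)` along a `G`-optimal
walk gives `D_F ≤ D_G`, and likewise `D_G ≤ D_F`. A weight `w` is flexible exactly when its additive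
cost `m ↦ m + w e` agrees with `f` at `d_w`; hence `d_w = D_f`, which forces
`w e = f_e(D_f(u)) - D_f(u)`, and this formula does define a flexible weight. The bounds come from
`m + w_M ≤ ⌈m⌉ ≤ m + W_M`.
-/

open Relation

section CeilTo

variable {w W : ℕ}

lemma ceilTo_mem (h : w ≤ W) (x : ℕ) :
    ceilTo w W x ∈ {n : ℕ | x + w ≤ n ∧ (1 + W - w) ∣ n} :=
  Nat.sInf_mem ⟨(1 + W - w) * (x + w), Nat.le_mul_of_pos_left _ (by omega), dvd_mul_right _ _⟩

lemma ceilTo_le (h : w ≤ W) (x : ℕ) : ceilTo w W x ≤ x + W := by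
  have hd : 0 < 1 + W - w := by omega
  have hmod := Nat.mod_lt (x + W) hd
  have hdiv := Nat.div_add_mod (x + W) (1 + W - w)
  have hmem : (1 + W - w) * ((x + W) / (1 + W - w)) ∈
      {n : ℕ | x + w ≤ n ∧ (1 + W - w) ∣ n} := ⟨by omega, dvd_mul_right _ _⟩
  exact (Nat.sInf_le hmem).trans (by omega)

lemma ceilTo_mono (h : w ≤ W) : Monotone (ceilTo w W) := fun x y hxy =>
  Nat.sInf_le ⟨by have := (ceilTo_mem h y).1; omega, (ceilTo_mem h y).2⟩

lemma ceilTo_sub_self_mem_Icc (h : w ≤ W) (x : ℕ) : ceilTo w W x - x ∈ Set.Icc w W := by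
  have := (ceilTo_mem h x).1
  have := ceilTo_le h x
  exact ⟨by omega, by omega⟩

end CeilTo

inductive HasWalkCost (E : V → V → Prop) (F : V × V → ℕ → ℕ) (s : V) : V → ℕ → Prop
  | nil : HasWalkCost E F s s 0
  | snoc {a b : V} {m : ℕ} :
      HasWalkCost E F s a m → E a b → HasWalkCost E F s b (F (a, b) m)

noncomputable def walkDist (E : V → V → Prop) (F : V × V → ℕ → ℕ) (s v : V) : ℕ :=
  sInf {n | HasWalkCost E F s v n}

def IsProgressive (E : V → V → Prop) (s : V) (F : V × V → ℕ → ℕ) : Prop :=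
  ∀ a b, E a b → ReflTransGen E s a → Monotone (F (a, b)) ∧ ∀ m, m < F (a, b) m

section WalkDist

variable {E : V → V → Prop} {F G : V × V → ℕ → ℕ} {s a b v : V} {n : ℕ}

lemma Relation.ReflTransGen.exists_hasWalkCost (h : ReflTransGen E s v) :
    ∃ n, HasWalkCost E F s v n := by
  induction h with
  | refl => exact ⟨0, .nil⟩
  | tail _ hab ih => obtain ⟨m, hm⟩ := ih; exact ⟨_, hm.snoc hab⟩

lemma HasWalkCost.reflTransGen (h : HasWalkCost E F s v n) : ReflTransGen E s v := by
  induction h with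
  | nil => exact .refl
  | snoc _ hab ih => exact ih.tail hab

lemma walkDist_le (h : HasWalkCost E F s v n) : walkDist E F s v ≤ n := Nat.sInf_le h

lemma hasWalkCost_walkDist (h : ReflTransGen E s v) : HasWalkCost E F s v (walkDist E F s v) :=
  Nat.sInf_mem h.exists_hasWalkCost

lemma walkDist_self : walkDist E F s s = 0 := Nat.le_zero.mp (walkDist_le .nil)

lemma walkDist_le_of_edge (ha : ReflTransGen E s a) (hab : E a b) :
    walkDist E F s b ≤ F (a, b) (walkDist E F s a) :=
  walkDist_le ((hasWalkCost_walkDist ha).snoc hab)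

lemma walkDist_le_walkDist (hG : IsProgressive E s G)
    (hFG : ∀ a b, E a b → ReflTransGen E s a → walkDist E F s a ≤ walkDist E G s a →
      F (a, b) (walkDist E F s a) ≤ G (a, b) (walkDist E G s a))
    (hv : ReflTransGen E s v) : walkDist E F s v ≤ walkDist E G s v := by
  obtain ⟨n, hn⟩ : ∃ n, walkDist E G s v = n := ⟨_, rfl⟩
  induction n using Nat.strong_induction_on generalizing v with
  | _ n ih =>
    have hwalk := hasWalkCost_walkDist (F := G) hv
    rw [hn] at hwalk ⊢
    cases hwalk with
    | nil => rw [walkDist_self]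
    | @snoc a _ m hwalk hab =>
      have ha := hwalk.reflTransGen
      have hGa := hG a v hab ha
      have hm : walkDist E G s a ≤ m := walkDist_le hwalk
      have hFa := ih (walkDist E G s a) (hm.trans_lt (hGa.2 m)) ha rfl
      calc walkDist E F s v ≤ F (a, v) (walkDist E F s a) := walkDist_le_of_edge ha hab
        _ ≤ G (a, v) (walkDist E G s a) := hFG a v hab ha hFa
        _ ≤ G (a, v) m := hGa.1 hm

lemma walkDist_eq_walkDist (hF : IsProgressive E s F) (hG : IsProgressive E s G)
    (hFG : ∀ a b, E a b → ReflTransGen E s a →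
      F (a, b) (walkDist E F s a) = G (a, b) (walkDist E F s a))
    (hv : ReflTransGen E s v) : walkDist E F s v = walkDist E G s v :=
  le_antisymm
    (walkDist_le_walkDist hG
      (fun a b hab ha hle => (hFG a b hab ha).trans_le ((hG a b hab ha).1 hle)) hv)
    (walkDist_le_walkDist hF
      (fun a b hab ha hle => ((hG a b hab ha).1 hle).trans_eq (hFG a b hab ha).symm) hv)

end WalkDist

section PathWeight

variable {E : V → V → Prop} {s u v : V} {m : ℕ}

def pathWeight (w : V × V → ℕ) (l : List V) : ℕ := ((l.zip l.tail).map fun p => w p).sum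

@[simp] lemma pathWeight_singleton (w : V × V → ℕ) (a : V) : pathWeight w [a] = 0 := rfl

@[simp] lemma pathWeight_cons_cons (w : V × V → ℕ) (a b : V) (l : List V) :
    pathWeight w (a :: b :: l) = w (a, b) + pathWeight w (b :: l) := by
  simp [pathWeight]

lemma HasWalkCost.append_chain {w : V × V → ℕ} :
    ∀ (l : List V) {u : V} {m : ℕ}, HasWalkCost E (fun e m => m + w e) s u m →
      (u :: l).IsChain E → (u :: l).getLast? = some v →
      HasWalkCost E (fun e m => m + w e) s v (m + pathWeight w (u :: l))
  | [], u, m, h, _, hlast => by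
    obtain rfl : u = v := by simpa using hlast
    simpa using h
  | b :: l, u, m, h, hchain, hlast => by
    rw [List.isChain_cons_cons] at hchain
    rw [List.getLast?_cons_cons] at hlast
    rw [pathWeight_cons_cons, ← add_assoc]
    exact HasWalkCost.append_chain l (h.snoc hchain.1) hchain.2 hlast

lemma HasWalkCost.exists_chain {w : V × V → ℕ} (h : HasWalkCost E (fun e m => m + w e) s u m)
    (l : List V) (hchain : (u :: l).IsChain E) (hlast : (u :: l).getLast? = some v) :
    ∃ l', l'.IsChain E ∧ l'.head? = some s ∧ l'.getLast? = some v ∧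
      pathWeight w l' = m + pathWeight w (u :: l) := by
  induction h generalizing l with
  | nil => exact ⟨_, hchain, rfl, hlast, (zero_add _).symm⟩
  | @snoc a b m _ hab ih =>
    obtain ⟨l', hl'⟩ := ih (b :: l) (List.isChain_cons_cons.mpr ⟨hab, hchain⟩)
      (by rwa [List.getLast?_cons_cons])
    refine ⟨l', hl'.1, hl'.2.1, hl'.2.2.1, ?_⟩
    rw [hl'.2.2.2, pathWeight_cons_cons]
    ring

lemma wdist_eq_walkDist (w : V × V → ℕ) (hv : ReflTransGen E s v) :
    wdist E (fun a b => w (a, b)) s v = walkDist E (fun e m => m + w e) s v := by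
  apply le_antisymm
  · obtain ⟨l, hchain, hhead, hlast, hweight⟩ :=
      (hasWalkCost_walkDist hv).exists_chain (w := w) [] (List.isChain_singleton v) rfl
    rw [pathWeight_singleton, add_zero] at hweight
    exact sInf_le ⟨l, hchain, hhead, hlast, by rw [← hweight]; rfl⟩
  · refine le_sInf ?_
    rintro _ ⟨_ | ⟨u, l⟩, hchain, hhead, hlast, rfl⟩
    · simp at hhead
    · obtain rfl : u = s := by simpa using hhead
      have := walkDist_le (HasWalkCost.nil.append_chain (w := w) l hchain hlast)
      rw [zero_add] at this
      exact_mod_cast this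

end PathWeight

section AdditiveCost

variable {E : V → V → Prop} {F : V × V → ℕ → ℕ} {s v : V}

lemma isProgressive_add {w : V × V → ℕ}
    (hw : ∀ a b, E a b → ReflTransGen E s a → 0 < w (a, b)) :
    IsProgressive E s (fun e m => m + w e) := fun a b hab ha =>
  ⟨fun _ _ h => Nat.add_le_add_right h _, fun _ => Nat.lt_add_of_pos_right (hw a b hab ha)⟩

lemma walkDist_add_eq_of_forall_eq_sub {w : V × V → ℕ} (hF : IsProgressive E s F)
    (hw : ∀ a b, E a b → ReflTransGen E s a → w (a, b) =
      F (a, b) (walkDist E (fun e m => m + w e) s a) - walkDist E (fun e m => m + w e) s a)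
    (hv : ReflTransGen E s v) :
    walkDist E (fun e m => m + w e) s v = walkDist E F s v := by
  have hpos : ∀ a b, E a b → ReflTransGen E s a → 0 < w (a, b) := fun a b hab ha => by
    rw [hw a b hab ha]
    exact Nat.sub_pos_of_lt ((hF a b hab ha).2 _)
  refine walkDist_eq_walkDist (isProgressive_add hpos) hF (fun a b hab ha => ?_) hv
  rw [hw a b hab ha]
  exact Nat.add_sub_cancel' ((hF a b hab ha).2 _).le

lemma walkDist_add_sub_walkDist (hF : IsProgressive E s F) (hv : ReflTransGen E s v) :
    walkDist E (fun e m => m + (F e (walkDist E F s e.1) - walkDist E F s e.1)) s v =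
      walkDist E F s v := by
  have hpos := fun a b hab ha => Nat.sub_pos_of_lt ((hF a b hab ha).2 (walkDist E F s a))
  refine (walkDist_eq_walkDist hF (isProgressive_add hpos) (fun a b hab ha => ?_) hv).symm
  exact (Nat.add_sub_cancel' ((hF a b hab ha).2 _).le).symm

end AdditiveCost

lemma flexWeight_iff {s : V} {E : Set (V × V)} {ℓ : V × V → ℕ} {wM WM : ℕ → ℕ}
    {w : V × V → ℕ} :
    FlexWeight s E ℓ wM WM w ↔ ∀ e ∈ E, ReflTransGen (fun a b => (a, b) ∈ E) s e.1 →
      w e = ceilTo (wM (ℓ e)) (WM (ℓ e))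
          (walkDist (fun a b => (a, b) ∈ E) (fun e m => m + w e) s e.1) -
        walkDist (fun a b => (a, b) ∈ E) (fun e m => m + w e) s e.1 := by
  refine forall₂_congr fun e _ => forall_congr' fun hs => ?_
  rw [wdist_eq_walkDist w hs]
  exact ⟨fun ⟨m, hm, hw⟩ => by rwa [Nat.cast_inj.mp hm], fun hw => ⟨_, rfl, hw⟩⟩

lemma isProgressive_ceilTo {s : V} {E : Set (V × V)} {k : ℕ} {ℓ : V × V → ℕ}
    (hℓ : ∀ e ∈ E, ℓ e ≤ k) {wM WM : ℕ → ℕ} (hwM : ∀ i ≤ k, 1 ≤ wM i)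
    (hWM : ∀ i ≤ k, wM i ≤ WM i) :
    IsProgressive (fun a b => (a, b) ∈ E) s (fun e => ceilTo (wM (ℓ e)) (WM (ℓ e))) :=
  fun a b hab _ =>
    ⟨ceilTo_mono (hWM _ (hℓ _ hab)), fun m => by
      dsimp only
      have := (ceilTo_mem (hWM _ (hℓ _ hab)) m).1
      have := hwM _ (hℓ _ hab)
      omega⟩

theorem stmt2_general {V : Type*} (s : V) (E : Set (V × V)) (k : ℕ)
    (ℓ : V × V → ℕ) (hℓ : ∀ e ∈ E, ℓ e ≤ k)
    (wM WM : ℕ → ℕ) (hwM : ∀ i ≤ k, 1 ≤ wM i) (hWM : ∀ i ≤ k, wM i ≤ WM i) :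
    (∃ w : V × V → ℕ, FlexWeight s E ℓ wM WM w) ∧
    (∀ w w' : V × V → ℕ, FlexWeight s E ℓ wM WM w → FlexWeight s E ℓ wM WM w' →
      ∀ e ∈ E, Relation.ReflTransGen (fun a b => (a, b) ∈ E) s e.1 → w e = w' e) ∧
    (∀ w : V × V → ℕ, FlexWeight s E ℓ wM WM w →
      ∀ e ∈ E, Relation.ReflTransGen (fun a b => (a, b) ∈ E) s e.1 →
        wM (ℓ e) ≤ w e ∧ w e ≤ WM (ℓ e)) := by
  set Er : V → V → Prop := fun a b => (a, b) ∈ E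
  set f : V × V → ℕ → ℕ := fun e => ceilTo (wM (ℓ e)) (WM (ℓ e))
  have hf : IsProgressive Er s f := isProgressive_ceilTo hℓ hwM hWM
  have hflex : ∀ w, FlexWeight s E ℓ wM WM w → ∀ e ∈ E, ReflTransGen Er s e.1 →
      w e = f e (walkDist Er f s e.1) - walkDist Er f s e.1 := by
    intro w hw e he hs
    have hw := flexWeight_iff.mp hw
    rw [hw e he hs, walkDist_add_eq_of_forall_eq_sub hf (fun a b hab ha => hw (a, b) hab ha) hs]
  refine ⟨⟨fun e => f e (walkDist Er f s e.1) - walkDist Er f s e.1,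
      flexWeight_iff.mpr fun e _ hs => ?_⟩,
    fun w w' hw hw' e he hs => ?_, fun w hw e he hs => ?_⟩
  · rw [walkDist_add_sub_walkDist hf hs]
  · rw [hflex w hw e he hs, hflex w' hw' e he hs]
  · rw [hflex w hw e he hs]
    exact ceilTo_sub_self_mem_Icc (hWM _ (hℓ e he)) _

/-- existence, uniqueness and bounds for the flexible edge-weight function. -/
theorem stmt2 {V : Type*} [Fintype V] (s : V) (E : Set (V × V)) (k : ℕ)
    (ℓ : V × V → ℕ) (hℓ : ∀ e ∈ E, ℓ e ≤ k)
    (wM WM : ℕ → ℕ) (hwM : ∀ i ≤ k, 1 ≤ wM i) (hWM : ∀ i ≤ k, wM i ≤ WM i) :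
    (∃ w : V × V → ℕ, FlexWeight s E ℓ wM WM w) ∧
    (∀ w w' : V × V → ℕ, FlexWeight s E ℓ wM WM w → FlexWeight s E ℓ wM WM w' →
      ∀ e ∈ E, Relation.ReflTransGen (fun a b => (a, b) ∈ E) s e.1 → w e = w' e) ∧
    (∀ w : V × V → ℕ, FlexWeight s E ℓ wM WM w →
      ∀ e ∈ E, Relation.ReflTransGen (fun a b => (a, b) ∈ E) s e.1 →
        wM (ℓ e) ≤ w e ∧ w e ≤ WM (ℓ e)) :=
  stmt2_general s E k ℓ hℓ wM WM hwM hWM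
end

section
/- Let n ≥ 2 be an integer, let a : ℕ → ℕ be finitely supported and b ∈ ℕ with Σ_{j∈ℕ} a_j + b = n. Let d1 ≤ d2 be natural numbers with d2 − d1 ≥ 2·lg n, and set q = (d2 − d1)/(2·lg n). If Σ_{j ≤ d1} a_j ≥ 1 and Σ_{j ≥ d2} a_j + b ≥ 1, then there exists an integer d with d1 ≤ d ≤ d2 such that q·a_d ≤ Σ_{j < d} a_j and q·a_d ≤ Σ_{j > d} a_j + b. -/
/-!
Suppose no layer in `[d1, d2]` is thin and put `Q = 1 + 1/q`. A layer that is not thin is larger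
than `1/q` times the smaller of the masses before and after it, so it multiplies that smaller side
by at least `Q`. Since the mass before grows and the mass after shrinks, the layers split at some
`s`: to the left of `s` the mass before grows by `Q` per layer, to the right of `s` the mass after
does, going leftwards. Starting from mass at least `1` at either end, the two sides of `s` have
masses `x`, `n - x` with `Q ^ (d2 - d1 - 1) ≤ x (n - x) ≤ n² / 4`, whereas Bernoulli's
inequality `(1 + 1/q) ^ q ≥ 2` and `d2 - d1 = 2 q lg n` give
`n² ≤ Q ^ (d2 - d1) ≤ 2 Q ^ (d2 - d1 - 1)`.
-/

open Finset Real

theorem exists_mem_Icc_forall_Ico_not_and_forall_Ico {P : ℕ → Prop} (hP : Monotone P)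
    {lo hi : ℕ} (h : lo ≤ hi) :
    ∃ s ∈ Icc lo hi, (∀ d ∈ Ico lo s, ¬ P d) ∧ ∀ d ∈ Ico s hi, P d := by
  induction hi, h using Nat.le_induction with
  | base => exact ⟨lo, by simp, by simp, by simp⟩
  | succ hi hle ih =>
    obtain ⟨s, hs, hleft, hright⟩ := ih
    by_cases hPhi : P hi
    · refine ⟨s, by simp only [mem_Icc] at hs ⊢; omega, hleft, fun d hd => ?_⟩
      rcases (Nat.lt_succ_iff_lt_or_eq.1 (mem_Ico.1 hd).2) with hd' | rfl
      · exact hright d (mem_Ico.2 ⟨(mem_Ico.1 hd).1, hd'⟩)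
      · exact hPhi
    · refine ⟨hi + 1, by simp only [mem_Icc]; omega, fun d hd hPd => ?_, by simp⟩
      exact hPhi (hP (Nat.lt_succ_iff.1 (mem_Ico.1 hd).2) hPd)

theorem pow_sub_mul_le_of_forall_mul_le_succ {f : ℕ → ℝ} {c : ℝ} (hc : 0 ≤ c) {m n : ℕ}
    (hmn : m ≤ n) (h : ∀ i ∈ Ico m n, c * f i ≤ f (i + 1)) : c ^ (n - m) * f m ≤ f n := by
  induction n, hmn using Nat.le_induction with
  | base => simp
  | succ n hmn ih =>
    calc c ^ (n + 1 - m) * f m = c * (c ^ (n - m) * f m) := by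
          rw [Nat.sub_add_comm hmn, pow_succ]; ring
      _ ≤ c * f n := by
          gcongr
          exact ih fun i hi => h i (mem_Ico.2 ⟨(mem_Ico.1 hi).1, by grind⟩)
      _ ≤ f (n + 1) := h n (mem_Ico.2 ⟨hmn, n.lt_succ_self⟩)

theorem pow_sub_mul_le_of_forall_mul_succ_le {f : ℕ → ℝ} {c : ℝ} (hc : 0 ≤ c) {m n : ℕ}
    (hmn : m ≤ n) (h : ∀ i ∈ Ico m n, c * f (i + 1) ≤ f i) : c ^ (n - m) * f n ≤ f m := by
  induction n, hmn using Nat.le_induction with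
  | base => simp
  | succ n hmn ih =>
    calc c ^ (n + 1 - m) * f (n + 1) = c ^ (n - m) * (c * f (n + 1)) := by
          rw [Nat.sub_add_comm hmn, pow_succ]; ring
      _ ≤ c ^ (n - m) * f n := by gcongr; exact h n (mem_Ico.2 ⟨hmn, n.lt_succ_self⟩)
      _ ≤ f m := ih fun i hi => h i (mem_Ico.2 ⟨(mem_Ico.1 hi).1, by grind⟩)

theorem one_add_inv_mul_le_add_of_le_mul {q s t : ℝ} (hq : 0 < q) (h : s ≤ q * t) :
    (1 + q⁻¹) * s ≤ s + t := by
  have : q⁻¹ * s ≤ t := by rwa [inv_mul_le_iff₀ hq]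
  linarith

theorem two_le_one_add_inv_rpow {q : ℝ} (hq : 1 ≤ q) : 2 ≤ (1 + q⁻¹) ^ q := by
  have h := one_add_mul_self_le_rpow_one_add (s := q⁻¹)
    (by linarith [inv_nonneg.2 (zero_le_one.trans hq)]) hq
  rwa [mul_inv_cancel₀ (by positivity), one_add_one_eq_two] at h

theorem sq_le_one_add_inv_pow {x q : ℝ} (hx : 1 ≤ x) (hq : 1 ≤ q) {k : ℕ}
    (hk : (k : ℝ) = q * (2 * logb 2 x)) : x ^ 2 ≤ (1 + q⁻¹) ^ k := by
  have hlog : 0 ≤ 2 * logb 2 x := by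
    have := logb_nonneg (b := 2) one_lt_two hx
    positivity
  calc x ^ 2 = (2 : ℝ) ^ (2 * logb 2 x) := by
        rw [mul_comm, rpow_mul zero_le_two, rpow_logb zero_lt_two (by norm_num) (by linarith),
          rpow_two]
    _ ≤ ((1 + q⁻¹) ^ q) ^ (2 * logb 2 x) :=
        rpow_le_rpow zero_le_two (two_le_one_add_inv_rpow hq) hlog
    _ = (1 + q⁻¹) ^ k := by rw [← rpow_mul (by positivity), ← hk, rpow_natCast]

theorem exists_pow_le_mul_of_forall_min_lt {a : ℕ → ℝ} (ha : ∀ j, 0 ≤ a j) {n q : ℝ} (hq : 0 < q)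
    {d1 d2 : ℕ} (hd : d1 < d2) (h1 : 1 ≤ ∑ j ∈ range (d1 + 1), a j)
    (h2 : ∑ j ∈ range d2, a j + 1 ≤ n)
    (hfat : ∀ d ∈ Icc d1 d2, min (∑ j ∈ range d, a j) (n - ∑ j ∈ range (d + 1), a j) < q * a d) :
    ∃ s, (1 + q⁻¹) ^ (d2 - d1 - 1) ≤ (∑ j ∈ range s, a j) * (n - ∑ j ∈ range s, a j) := by
  set x : ℕ → ℝ := fun d => ∑ j ∈ range d, a j
  have hx_succ (d : ℕ) : x (d + 1) = x d + a d := sum_range_succ a d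
  have hx_mono : Monotone x := monotone_nat_of_le_succ fun d => by rw [hx_succ]; linarith [ha d]
  set Q := 1 + q⁻¹
  have hQ0 : 0 < Q := by positivity
  obtain ⟨s, hs, hleft, hright⟩ := exists_mem_Icc_forall_Ico_not_and_forall_Ico
    (P := fun d => n - x (d + 1) ≤ x d)
    (fun d e hde h => by linarith [hx_mono hde, hx_mono (Nat.succ_le_succ hde)]) hd
  obtain ⟨hs1, hs2⟩ := mem_Icc.1 hs
  have hbefore : Q ^ (s - (d1 + 1)) * x (d1 + 1) ≤ x s := by
    refine pow_sub_mul_le_of_forall_mul_le_succ hQ0.le hs1 fun d hd => ?_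
    have := hfat d <|
      Ico_subset_Icc_self (Ico_subset_Ico_left d1.le_succ (Ico_subset_Ico_right hs2 hd))
    rw [min_eq_left (not_le.1 (hleft d hd)).le] at this
    rw [hx_succ]
    exact one_add_inv_mul_le_add_of_le_mul hq this.le
  have hafter : Q ^ (d2 - s) * (n - x d2) ≤ n - x s := by
    refine pow_sub_mul_le_of_forall_mul_succ_le (f := fun d => n - x d) hQ0.le hs2 fun d hd => ?_
    have := hfat d <| Ico_subset_Icc_self (Ico_subset_Ico_left (d1.le_succ.trans hs1) hd)
    rw [min_eq_right (hright d hd)] at this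
    have := one_add_inv_mul_le_add_of_le_mul hq this.le
    simp only [hx_succ] at this ⊢
    linarith
  refine ⟨s, ?_⟩
  calc Q ^ (d2 - d1 - 1) = (Q ^ (s - (d1 + 1)) * 1) * (Q ^ (d2 - s) * 1) := by
        rw [mul_one, mul_one, ← pow_add]; congr 1; omega
    _ ≤ (Q ^ (s - (d1 + 1)) * x (d1 + 1)) * (Q ^ (d2 - s) * (n - x d2)) := by
        gcongr; linarith
    _ ≤ x s * (n - x s) :=
        mul_le_mul hbefore hafter (mul_nonneg (by positivity) (by linarith))
          (sum_nonneg fun j _ => ha j)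

/-- `∑ j ∈ range d, a j` is the mass strictly before layer `d`, and
`n - ∑ j ∈ range (d + 1), a j` the mass strictly after it. -/
theorem exists_thin_layer {a : ℕ → ℝ} (ha : ∀ j, 0 ≤ a j) {n q : ℝ} (hq : 1 ≤ q) {d1 d2 : ℕ}
    (hd : d1 < d2) (h1 : 1 ≤ ∑ j ∈ range (d1 + 1), a j) (h2 : ∑ j ∈ range d2, a j + 1 ≤ n)
    (hpow : n ^ 2 ≤ (1 + q⁻¹) ^ (d2 - d1)) :
    ∃ d ∈ Icc d1 d2, q * a d ≤ ∑ j ∈ range d, a j ∧ q * a d ≤ n - ∑ j ∈ range (d + 1), a j := by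
  by_contra! hthin
  have hfat (d : ℕ) (hd : d ∈ Icc d1 d2) :
      min (∑ j ∈ range d, a j) (n - ∑ j ∈ range (d + 1), a j) < q * a d := by
    by_cases h : q * a d ≤ ∑ j ∈ range d, a j
    · exact (min_le_right _ _).trans_lt (hthin d hd h)
    · exact (min_le_left _ _).trans_lt (not_le.1 h)
  obtain ⟨s, hs⟩ := exists_pow_le_mul_of_forall_min_lt ha (by linarith) hd h1 h2 hfat
  set Q := 1 + q⁻¹
  have hQ2 : Q ≤ 2 := by linarith [inv_le_one_of_one_le₀ hq]
  have hamgm := four_mul_le_sq_add (∑ j ∈ range s, a j) (n - ∑ j ∈ range s, a j)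
  rw [add_sub_cancel] at hamgm
  have hpow' : n ^ 2 ≤ 2 * Q ^ (d2 - d1 - 1) := calc
    n ^ 2 ≤ Q ^ (d2 - d1) := hpow
    _ = Q * Q ^ (d2 - d1 - 1) := by rw [← pow_succ']; congr 1; omega
    _ ≤ 2 * Q ^ (d2 - d1 - 1) := by gcongr
  nlinarith [pow_pos (by positivity : 0 < Q) (d2 - d1 - 1)]

theorem Finsupp.sum_range_add_sum_filter_le {M : Type*} [AddCommMonoid M] (a : ℕ →₀ M) (d : ℕ) :
    ∑ j ∈ range d, a j + ∑ j ∈ a.support.filter (fun j => d ≤ j), a j = ∑ j ∈ a.support, a j := by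
  classical
  rw [add_comm, ← Finset.sum_filter_add_sum_filter_not a.support (fun j => d ≤ j)]
  congr 1
  refine (sum_subset (fun j hj => ?_) (fun j hj hj' => ?_)).symm
  · exact mem_range.2 (not_le.1 (mem_filter.1 hj).2)
  · simpa [mem_range.1 hj] using hj'

theorem stmt3_general (n : ℕ) (hn : 2 ≤ n) (a : ℕ →₀ ℕ) (b : ℕ)
    (htot : (∑ j ∈ a.support, a j) + b = n)
    (d1 d2 : ℕ)
    (hgap : 2 * Real.logb 2 n ≤ (d2 : ℝ) - d1)
    (h1 : 1 ≤ ∑ j ∈ Finset.range (d1 + 1), a j)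
    (h2 : 1 ≤ (∑ j ∈ a.support.filter fun j => d2 ≤ j, a j) + b) :
    ∃ d : ℕ, d1 ≤ d ∧ d ≤ d2 ∧
      ((d2 : ℝ) - d1) / (2 * Real.logb 2 n) * a d ≤ (∑ j ∈ Finset.range d, a j : ℕ) ∧
      ((d2 : ℝ) - d1) / (2 * Real.logb 2 n) * a d ≤
        ((∑ j ∈ a.support.filter fun j => d < j, a j) + b : ℕ) := by
  have hn' : (2 : ℝ) ≤ n := by exact_mod_cast hn
  have hlog : 1 ≤ logb 2 (n : ℝ) := by
    simpa using logb_le_logb_of_le (b := 2) one_lt_two zero_lt_two hn'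
  have hd : d1 < d2 := by exact_mod_cast (by linarith : (d1 : ℝ) < d2)
  set q := ((d2 : ℝ) - d1) / (2 * logb 2 n)
  have hq : 1 ≤ q := by rw [le_div_iff₀ (by positivity)]; linarith
  have hpow : (n : ℝ) ^ 2 ≤ (1 + q⁻¹) ^ (d2 - d1) := sq_le_one_add_inv_pow (by linarith) hq
    (by rw [Nat.cast_sub hd.le, div_mul_cancel₀ _ (by positivity)])
  have hbefore_d2 : ∑ j ∈ range d2, a j + 1 ≤ n := by
    have := a.sum_range_add_sum_filter_le d2
    omega
  have hafter_eq (d : ℕ) :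
      ∑ j ∈ range (d + 1), a j + ((∑ j ∈ a.support.filter fun j => d < j, a j) + b) = n := by
    rw [← htot, ← add_assoc, ← a.sum_range_add_sum_filter_le (d + 1)]
    rfl
  obtain ⟨d, hd, hbefore, hafter⟩ := exists_thin_layer (a := fun j => (a j : ℝ))
    (fun j => Nat.cast_nonneg _) hq hd (by exact_mod_cast h1) (by exact_mod_cast hbefore_d2) hpow
  refine ⟨d, (mem_Icc.1 hd).1, (mem_Icc.1 hd).2, by push_cast; exact hbefore, ?_⟩
  have := congrArg (Nat.cast : ℕ → ℝ) (hafter_eq d)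
  push_cast at this ⊢
  linarith

/-- the counting core of the ThinLayer algorithm. -/
theorem stmt3 (n : ℕ) (hn : 2 ≤ n) (a : ℕ →₀ ℕ) (b : ℕ)
    (htot : (∑ j ∈ a.support, a j) + b = n)
    (d1 d2 : ℕ) (hd : d1 ≤ d2)
    (hgap : 2 * Real.logb 2 n ≤ (d2 : ℝ) - d1)
    (h1 : 1 ≤ ∑ j ∈ Finset.range (d1 + 1), a j)
    (h2 : 1 ≤ (∑ j ∈ a.support.filter fun j => d2 ≤ j, a j) + b) :
    ∃ d : ℕ, d1 ≤ d ∧ d ≤ d2 ∧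
      ((d2 : ℝ) - d1) / (2 * Real.logb 2 n) * a d ≤ (∑ j ∈ Finset.range d, a j : ℕ) ∧
      ((d2 : ℝ) - d1) / (2 * Real.logb 2 n) * a d ≤
        ((∑ j ∈ a.support.filter fun j => d < j, a j) + b : ℕ) :=
  stmt3_general n hn a b htot d1 d2 hgap h1 h2
end

section
/- Let H be a digraph on a finite vertex set V with n = |V| ≥ 2 vertices, let r ∈ V, let d1 < d2 be natural numbers with d2 − d1 ≥ 2·lg n, and let k ≥ 1 be an integer. Suppose |{v ∈ V : d_H(r, v) ≤ d1}| ≥ k and |{v ∈ V : d_H(r, v) ≥ d2}| ≥ k, where unreachable vertices have distance ∞ and hence count toward the second set. Then there exists an integer d with d1 ≤ d ≤ d2 such that the set S = {v ∈ V : d_H(r, v) = d} is a q-quality separator of H with q = (d2 − d1)/(2·lg n), and every SCC of H ∖ E(S) contains at most n − k vertices. -/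
variable {V : Type*}

/-!
Let `S_d` be the layer at distance `d` from `r`. Distances grow by at most one along an edge,
so once the edges at `S_d` are removed, every SCC lies strictly inside the ball of radius `d`,
is a single vertex of `S_d`, or lies strictly outside that ball. Hence `S_d` is a `q`-quality
separator as soon as `q·|S_d|` is at most the size of the inside (or outside) and that side
holds at most half of the vertices.

Such a layer exists between `d1` and `d2`: split at the midpoint and work on a side holding
at most `n/2` vertices. If `q·|S_d|` exceeded the part already enclosed for every layer on that
side, the enclosed part would grow by a factor `1 + 1/q ≥ 2^(1/q)` per layer, hence exceed
`n/2` within `q·(lg n - 1)` layers, fewer than the `(d2 - d1)/2 ≥ q·lg n` available.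
-/

section Graph

variable {E : V → V → Prop}

theorem ddist_le_add_one_of_edge {r u v : V} (h : E u v) :
    ddist E r v ≤ ddist E r u + 1 := by
  rcases eq_or_ne (ddist E r u) ⊤ with hu | hu
  · simp [hu]
  rw [ddist] at hu
  obtain ⟨_, hmem, -⟩ := sInf_lt_iff.mp (lt_top_iff_ne_top.mpr hu)
  obtain ⟨l, hc, hh, hl, hn⟩ := csInf_mem ⟨_, hmem⟩
  have hl0 : l ≠ [] := by rintro rfl; simp at hh
  calc ddist E r v ≤ ((l ++ [v]).length - 1 : ℕ) := by
        refine sInf_le ⟨l ++ [v], ?_, by rwa [List.head?_append_of_ne_nil _ hl0], by simp, rfl⟩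
        refine List.isChain_append.mpr ⟨hc, List.isChain_singleton v, ?_⟩
        intro x hx y hy
        simp_all
    _ = ddist E r u + 1 := by
        rw [ddist, hn, List.length_append, List.length_singleton, Nat.add_sub_cancel,
          ← Nat.succ_pred_eq_of_pos (List.length_pos_iff.mpr hl0)]
        simp

variable {f : V → ℕ∞} {d : ℕ}

theorem lt_of_reflTransGen_edgesAvoiding (hf : ∀ a b, E a b → f b ≤ f a + 1) {a b : V}
    (h : Relation.ReflTransGen (edgesAvoiding E {u | f u = d}) a b) (ha : f a < d) :
    f b < d := by
  induction h with
  | refl => exact ha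
  | tail _ hbc ih =>
    obtain ⟨hE, -, hc⟩ := hbc
    exact ((hf _ _ hE).trans (Order.add_one_le_of_lt ih)).lt_of_ne hc

theorem scc_edgesAvoiding_of_mem {S : Set V} {v : V} (hv : v ∈ S) :
    scc (edgesAvoiding E S) v = {v} := by
  refine Set.eq_singleton_iff_unique_mem.mpr ⟨⟨.refl, .refl⟩, fun u hu => ?_⟩
  rcases hu.1.cases_tail with h | ⟨c, -, hcv⟩
  · exact h.symm
  · exact absurd hv hcv.2.2

theorem scc_edgesAvoiding_layer_cases (hf : ∀ a b, E a b → f b ≤ f a + 1) (v : V) :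
    scc (edgesAvoiding E {u | f u = d}) v ⊆ {u | f u < d} ∨
      scc (edgesAvoiding E {u | f u = d}) v = {v} ∨
      scc (edgesAvoiding E {u | f u = d}) v ⊆ {u | d < f u} := by
  rcases lt_trichotomy (f v) d with hv | hv | hv
  · exact .inl fun u hu => lt_of_reflTransGen_edgesAvoiding hf hu.2 hv
  · exact .inr (.inl (scc_edgesAvoiding_of_mem hv))
  refine .inr (.inr fun u hu => show (d : ℕ∞) < f u from lt_of_not_ge fun hle => ?_)
  -- `u ≠ v` has an outgoing edge avoiding the layer, so `u` is not in the layer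
  have hlt : f u < d := by
    refine hle.lt_of_ne fun hud => ?_
    rcases hu.1.cases_head with rfl | ⟨c, huc, -⟩
    · exact hv.ne' hud
    · exact huc.2.1 hud
  exact (lt_of_reflTransGen_edgesAvoiding hf hu.1 hlt).not_gt hv

theorem ncard_scc_edgesAvoiding_layer_le [Finite V] (hf : ∀ a b, E a b → f b ≤ f a + 1)
    (v : V) : (scc (edgesAvoiding E {u | f u = d}) v).ncard ≤
      max {u | f u < d}.ncard (max 1 {u | d < f u}.ncard) := by
  rcases scc_edgesAvoiding_layer_cases hf v with h | h | h
  · exact le_max_of_le_left (Set.ncard_le_ncard h)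
  · simp [h]
  · exact le_max_of_le_right (le_max_of_le_right (Set.ncard_le_ncard h))

end Graph

theorem exists_mul_sub_lt_of_lt_two_rpow {q : ℝ} (hq : 1 ≤ q) {u : ℕ → ℝ} {t : ℕ}
    (h0 : 1 ≤ u 0) (ht : u t < 2 ^ (t / q)) : ∃ k < t, q * (u (k + 1) - u k) < u k := by
  by_contra! h
  have hq0 : 0 < q := one_pos.trans_le hq
  have hgrow : ∀ k < t, (1 + q⁻¹) * u k ≤ u (k + 1) := fun k hk => by
    have : u k / q ≤ u (k + 1) - u k := (div_le_iff₀' hq0).mpr (h k hk)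
    rw [add_mul, one_mul, inv_mul_eq_div]
    linarith
  have hbern : (2 : ℝ) ^ q⁻¹ ≤ 1 + q⁻¹ := by
    simpa [one_add_one_eq_two] using rpow_one_add_le_one_add_mul_self (s := 1)
      (by norm_num) (inv_nonneg.mpr hq0.le) (inv_le_one_of_one_le₀ hq)
  have : (2 : ℝ) ^ (t / q) ≤ u t :=
    calc (2 : ℝ) ^ (t / q) = ((2 : ℝ) ^ q⁻¹) ^ t := by
          rw [← Real.rpow_natCast, ← Real.rpow_mul zero_le_two, div_eq_mul_inv, mul_comm]
      _ ≤ (1 + q⁻¹) ^ t := pow_le_pow_left₀ (by positivity) hbern t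
      _ ≤ (1 + q⁻¹) ^ t * u 0 := le_mul_of_one_le_right (by positivity) h0
      _ ≤ u t := geom_le (by positivity) t hgrow
  linarith

theorem setOf_lt_natCast_succ (f : V → ℕ∞) (j : ℕ) :
    {v | f v < ↑(j + 1)} = {v | f v ≤ j} := by
  ext v
  simp only [Set.mem_ofPred_eq, Nat.cast_succ, ENat.lt_natCast_add_one_iff]

theorem setOf_natCast_succ_le (f : V → ℕ∞) (j : ℕ) :
    {v | ↑(j + 1) ≤ f v} = {v | (j : ℕ∞) < f v} := by
  ext v
  simp only [Set.mem_ofPred_eq, Nat.cast_succ, ENat.add_one_le_iff (ENat.natCast_ne_top j)]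

section LevelSets

variable [Fintype V] (f : V → ℕ∞)

theorem ncard_add_ncard_le_card_of_disjoint {A B : Set V} (h : Disjoint A B) :
    A.ncard + B.ncard ≤ Fintype.card V := by
  rw [← Set.ncard_union_eq h, ← Nat.card_eq_fintype_card]
  exact Set.ncard_le_card _

theorem ncard_le_natCast_add_ncard_natCast_lt_eq_card (j : ℕ) :
    {v | f v ≤ j}.ncard + {v | (j : ℕ∞) < f v}.ncard = Fintype.card V := by
  have := Set.ncard_add_ncard_compl {v | f v ≤ j}
  simpa [Set.compl_ofPred, Nat.card_eq_fintype_card] using this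

theorem ncard_le_natCast_succ (j : ℕ) :
    {v | f v ≤ ↑(j + 1)}.ncard = {v | f v ≤ j}.ncard + {v | f v = ↑(j + 1)}.ncard := by
  rw [← Set.ncard_union_eq]
  · congr 1
    ext v
    simp only [Set.mem_ofPred_eq, Set.mem_union, Nat.cast_succ]
    rw [le_iff_lt_or_eq, ENat.lt_natCast_add_one_iff]
  · refine Set.disjoint_left.mpr fun v (hv : f v ≤ j) (hv' : f v = ↑(j + 1)) => ?_
    rw [hv', Nat.cast_le] at hv
    omega

theorem ncard_natCast_lt (j : ℕ) :
    {v | (j : ℕ∞) < f v}.ncard =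
      {v | ((j + 1 : ℕ) : ℕ∞) < f v}.ncard + {v | f v = ↑(j + 1)}.ncard := by
  rw [← Set.ncard_union_eq]
  · congr 1
    ext v
    simp only [Set.mem_ofPred_eq, Set.mem_union, Nat.cast_succ,
      ← ENat.add_one_le_iff (ENat.natCast_ne_top j), le_iff_lt_or_eq (a := (j : ℕ∞) + 1),
      eq_comm]
  · refine Set.disjoint_left.mpr fun v (hv : _ < f v) (hv' : f v = _) => ?_
    exact hv.ne' hv'

theorem ncard_le_natCast_mono {i j : ℕ} (h : i ≤ j) :
    {v | f v ≤ i}.ncard ≤ {v | f v ≤ j}.ncard :=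
  Set.ncard_le_ncard fun v (hv : f v ≤ i) => show f v ≤ j from hv.trans (Nat.cast_le.mpr h)

theorem ncard_natCast_lt_anti {i j : ℕ} (h : i ≤ j) :
    {v | (j : ℕ∞) < f v}.ncard ≤ {v | (i : ℕ∞) < f v}.ncard :=
  Set.ncard_le_ncard fun v (hv : (j : ℕ∞) < f v) => show (i : ℕ∞) < f v from
    (Nat.cast_le.mpr h).trans_lt hv

end LevelSets

section ThinLayer

variable [Fintype V] (f : V → ℕ∞) {q : ℝ}

theorem exists_thin_layer_below (hq : 1 ≤ q) {a t : ℕ} (hpos : 1 ≤ {v | f v ≤ a}.ncard)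
    (hhalf : 2 * {v | f v ≤ ↑(a + t)}.ncard ≤ Fintype.card V)
    (hlen : q * (Real.logb 2 (Fintype.card V) - 1) < t) :
    ∃ d, a < d ∧ d ≤ a + t ∧ q * {v | f v = d}.ncard < {v | f v < d}.ncard ∧
      2 * {v | f v < d}.ncard ≤ Fintype.card V := by
  have hn : (0 : ℝ) < Fintype.card V := by
    exact_mod_cast hpos.trans (by simpa using Set.ncard_le_card {v | f v ≤ a})
  have hsmall : ({v | f v ≤ ↑(a + t)}.ncard : ℝ) < 2 ^ (t / q) := by
    have : (Fintype.card V : ℝ) < 2 ^ (t / q + 1) := by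
      rw [← Real.logb_lt_iff_lt_rpow one_lt_two hn, ← sub_lt_iff_lt_add,
        lt_div_iff₀' (one_pos.trans_le hq)]
      exact hlen
    rw [Real.rpow_add_one two_ne_zero] at this
    have : 2 * ({v | f v ≤ ↑(a + t)}.ncard : ℝ) ≤ Fintype.card V := by exact_mod_cast hhalf
    linarith
  obtain ⟨k, hk, hthin⟩ := exists_mul_sub_lt_of_lt_two_rpow hq
    (u := fun k => ({v | f v ≤ ↑(a + k)}.ncard : ℝ)) (by simpa using hpos) hsmall
  refine ⟨a + k + 1, by omega, by omega, ?_, ?_⟩ <;> rw [setOf_lt_natCast_succ]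
  · rwa [← add_assoc, ncard_le_natCast_succ f (a + k), Nat.cast_add (R := ℝ),
      add_sub_cancel_left] at hthin
  · exact (Nat.mul_le_mul_left 2 (ncard_le_natCast_mono f (by omega))).trans hhalf

theorem exists_thin_layer_above (hq : 1 ≤ q) {m t : ℕ}
    (hpos : 1 ≤ {v | ↑(m + t) < f v}.ncard)
    (hhalf : 2 * {v | (m : ℕ∞) < f v}.ncard < Fintype.card V)
    (hlen : q * (Real.logb 2 (Fintype.card V) - 1) ≤ t) :
    ∃ d, m < d ∧ d ≤ m + t ∧ q * {v | f v = d}.ncard < {v | (d : ℕ∞) < f v}.ncard ∧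
      2 * {v | (d : ℕ∞) < f v}.ncard ≤ Fintype.card V := by
  have hn : (0 : ℝ) < Fintype.card V := by exact_mod_cast (Nat.zero_le _).trans_lt hhalf
  have hsmall : ({v | ↑(m + t - t) < f v}.ncard : ℝ) < 2 ^ (t / q) := by
    have : (Fintype.card V : ℝ) ≤ 2 ^ (t / q + 1) := by
      rw [← Real.logb_le_iff_le_rpow one_lt_two hn, ← sub_le_iff_le_add,
        le_div_iff₀' (one_pos.trans_le hq)]
      exact hlen
    rw [Real.rpow_add_one two_ne_zero] at this
    have : 2 * ({v | (m : ℕ∞) < f v}.ncard : ℝ) < Fintype.card V := by exact_mod_cast hhalf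
    rw [Nat.add_sub_cancel]
    linarith
  obtain ⟨k, hk, hthin⟩ := exists_mul_sub_lt_of_lt_two_rpow hq
    (u := fun k => ({v | ↑(m + t - k) < f v}.ncard : ℝ)) (by simpa using hpos) hsmall
  obtain ⟨j, hj⟩ : ∃ j, m + t - k = j + 1 := ⟨m + t - k - 1, by omega⟩
  have hj' : m + t - (k + 1) = j := by omega
  rw [hj, hj', ncard_natCast_lt f j, Nat.cast_add (R := ℝ), add_sub_cancel_left] at hthin
  refine ⟨j + 1, by omega, by omega, hthin, ?_⟩
  exact (Nat.mul_le_mul_left 2 (ncard_natCast_lt_anti f (by omega))).trans hhalf.le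

theorem exists_thin_layer_s4 (hq : 1 ≤ q) {d1 d2 : ℕ} (hd : d1 < d2)
    (hgap : 2 * q * Real.logb 2 (Fintype.card V) ≤ (d2 : ℝ) - d1)
    (h1 : 1 ≤ {v | f v ≤ d1}.ncard) (h2 : 1 ≤ {v | (d2 : ℕ∞) ≤ f v}.ncard) :
    ∃ d, d1 < d ∧ d < d2 ∧
      (q * {v | f v = d}.ncard ≤ {v | f v < d}.ncard ∧
          2 * {v | f v < d}.ncard ≤ Fintype.card V ∨
        q * {v | f v = d}.ncard ≤ {v | (d : ℕ∞) < f v}.ncard ∧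
          2 * {v | (d : ℕ∞) < f v}.ncard ≤ Fintype.card V) := by
  obtain ⟨e, rfl⟩ : ∃ e, d2 = e + 1 := ⟨d2 - 1, by omega⟩
  have hgap' : (2 * q * Real.logb 2 (Fintype.card V) : ℝ) ≤ (e + 1 - d1 : ℕ) := by
    rwa [Nat.cast_sub hd.le]
  set m := d1 + (e + 1 - d1) / 2 with hm
  by_cases hhalf : 2 * {v | f v ≤ m}.ncard ≤ Fintype.card V
  · have hlen : q * (Real.logb 2 (Fintype.card V) - 1) < ((e + 1 - d1) / 2 : ℕ) := by
      have : ((e + 1 - d1 : ℕ) : ℝ) ≤ 2 * (((e + 1 - d1) / 2 : ℕ) : ℝ) + 1 := by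
        exact_mod_cast (show e + 1 - d1 ≤ 2 * ((e + 1 - d1) / 2) + 1 by omega)
      linarith
    obtain ⟨d, hd1, hdm, hthin, hsmall⟩ := exists_thin_layer_below f hq h1 hhalf hlen
    exact ⟨d, hd1, by omega, .inl ⟨hthin.le, hsmall⟩⟩
  · have hlen : q * (Real.logb 2 (Fintype.card V) - 1) ≤ (e - m : ℕ) := by
      have : ((e + 1 - d1 : ℕ) : ℝ) ≤ 2 * ((e - m : ℕ) : ℝ) + 2 := by
        exact_mod_cast (show e + 1 - d1 ≤ 2 * (e - m) + 2 by omega)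
      linarith
    have hpos : 1 ≤ {v | ↑(m + (e - m)) < f v}.ncard := by
      rwa [Nat.add_sub_cancel' (by omega), ← setOf_natCast_succ_le]
    have hhalf' : 2 * {v | (m : ℕ∞) < f v}.ncard < Fintype.card V := by
      have := ncard_le_natCast_add_ncard_natCast_lt_eq_card f m
      omega
    obtain ⟨d, hmd, hde, hthin, hsmall⟩ := exists_thin_layer_above f hq hpos hhalf' hlen
    exact ⟨d, by omega, by omega, .inr ⟨hthin.le, hsmall⟩⟩

end ThinLayer

theorem qualSep_layer [Fintype V] {E : V → V → Prop} {f : V → ℕ∞}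
    (hf : ∀ a b, E a b → f b ≤ f a + 1) {q : ℝ} {d : ℕ} (hn : 2 ≤ Fintype.card V)
    (hthin : q * {v | f v = d}.ncard ≤ {v | f v < d}.ncard ∧
          2 * {v | f v < d}.ncard ≤ Fintype.card V ∨
        q * {v | f v = d}.ncard ≤ {v | (d : ℕ∞) < f v}.ncard ∧
          2 * {v | (d : ℕ∞) < f v}.ncard ≤ Fintype.card V) :
    QualSep E q {v | f v = d} := by
  intro v
  have hscc : ((scc (edgesAvoiding E {u | f u = d}) v).ncard : ℝ) ≤
      max ({u | f u < d}.ncard : ℝ) (max 1 {u | (d : ℕ∞) < f u}.ncard) := by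
    exact_mod_cast ncard_scc_edgesAvoiding_layer_le hf v
  have hLR : ({u | f u < d}.ncard + {u | (d : ℕ∞) < f u}.ncard : ℝ) ≤ Fintype.card V := by
    exact_mod_cast ncard_add_ncard_le_card_of_disjoint
      ((Set.Iio_disjoint_Ioi_of_le (le_refl (d : ℕ∞))).preimage f)
  have hn' : (2 : ℝ) ≤ Fintype.card V := by exact_mod_cast hn
  refine hscc.trans (max_le ?_ (max_le ?_ ?_)) <;>
  rcases hthin with ⟨hthin, hhalf⟩ | ⟨hthin, hhalf⟩ <;>
  · have := (Nat.cast_le (α := ℝ)).mpr hhalf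
    rw [Nat.cast_mul, Nat.cast_ofNat] at this
    linarith

theorem ncard_scc_edgesAvoiding_layer_le_card_sub [Fintype V] {E : V → V → Prop}
    {f : V → ℕ∞} (hf : ∀ a b, E a b → f b ≤ f a + 1) {d1 d d2 k : ℕ} (hd1 : d1 ≤ d)
    (hd2 : d ≤ d2) (hd : d1 < d2) (hk : 1 ≤ k) (h1 : k ≤ {v | f v ≤ d1}.ncard)
    (h2 : k ≤ {v | (d2 : ℕ∞) ≤ f v}.ncard) (v : V) :
    (scc (edgesAvoiding E {u | f u = d}) v).ncard ≤ Fintype.card V - k := by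
  have hlow := ncard_add_ncard_le_card_of_disjoint (A := {v | f v < d})
    (B := {v | (d2 : ℕ∞) ≤ f v})
    ((Set.Iio_disjoint_Ici (Nat.cast_le.mpr hd2)).preimage f)
  have hhigh := ncard_add_ncard_le_card_of_disjoint (A := {v | f v ≤ d1})
    (B := {v | (d : ℕ∞) < f v})
    ((Set.Iic_disjoint_Ioi (Nat.cast_le.mpr hd1)).preimage f)
  have hends := ncard_add_ncard_le_card_of_disjoint (A := {v | f v ≤ d1})
    (B := {v | (d2 : ℕ∞) ≤ f v})
    ((Set.Iic_disjoint_Ici.mpr (not_le.mpr (Nat.cast_lt.mpr hd))).preimage f)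
  exact (ncard_scc_edgesAvoiding_layer_le hf v).trans
    (max_le (by omega) (max_le (by omega) (by omega)))

/-- the ThinLayer lemma (existence content). -/
theorem stmt4 {V : Type*} [Fintype V] (E : V → V → Prop) (r : V)
    (hn : 2 ≤ Fintype.card V)
    (d1 d2 : ℕ) (hd : d1 < d2)
    (hgap : 2 * Real.logb 2 (Fintype.card V) ≤ (d2 : ℝ) - d1)
    (k : ℕ) (hk : 1 ≤ k)
    (h1 : k ≤ {v : V | ddist E r v ≤ (d1 : ℕ∞)}.ncard)
    (h2 : k ≤ {v : V | (d2 : ℕ∞) ≤ ddist E r v}.ncard) :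
    ∃ d : ℕ, d1 ≤ d ∧ d ≤ d2 ∧
      QualSep E ((d2 - d1 : ℝ) / (2 * Real.logb 2 (Fintype.card V)))
        {v : V | ddist E r v = (d : ℕ∞)} ∧
      ∀ v : V,
        (scc (edgesAvoiding E {v : V | ddist E r v = (d : ℕ∞)}) v).ncard
          ≤ Fintype.card V - k := by
  have hlog : 0 < 2 * Real.logb 2 (Fintype.card V) :=
    mul_pos two_pos (Real.logb_pos one_lt_two (by exact_mod_cast hn))
  set q := (d2 - d1 : ℝ) / (2 * Real.logb 2 (Fintype.card V))
  have hq : 1 ≤ q := by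
    rw [one_le_div₀ hlog]
    linarith [Real.logb_self_eq_one one_lt_two, Real.logb_le_logb_of_le one_lt_two two_pos
      (show (2 : ℝ) ≤ Fintype.card V by exact_mod_cast hn)]
  have hgap' : 2 * q * Real.logb 2 (Fintype.card V) ≤ (d2 : ℝ) - d1 :=
    (by rw [mul_comm 2 q, mul_assoc, div_mul_cancel₀ _ hlog.ne'] : _ = _).le
  have hf : ∀ a b, E a b → ddist E r b ≤ ddist E r a + 1 :=
    fun _ _ => ddist_le_add_one_of_edge
  obtain ⟨d, hd1, hd2, hthin⟩ :=
    exists_thin_layer_s4 (ddist E r) hq hd hgap' (hk.trans h1) (hk.trans h2)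
  exact ⟨d, hd1.le, hd2.le, qualSep_layer hf hn hthin,
    ncard_scc_edgesAvoiding_layer_le_card_sub hf hd1.le hd2.le hd hk h1 h2⟩
end

section
/- Let H be a digraph on a finite vertex set V with n = |V| vertices and let d ≥ 1 be an integer. Then there exists a set S ⊆ V such that every SCC of H ∖ E(S) has diameter at most d, and, letting 𝒞 denote the collection of vertex sets of the SCCs of H ∖ E(S), |S| ≤ (4·lg n / d) · Σ_{C ∈ 𝒞} |C|·(lg n − lg |C|). -/
/-
If some SCC `C` contains `u₁, u₂` at distance `> d` inside `C`, the out-ball of `u₁` and the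
in-ball of `u₂` of radius `r = ⌊d/2⌋` are disjoint, so one of them, say the out-ball, has at
most `|C|/2` vertices. For `c = 4 lg n / d` and `d > 4 lg² n` we have `(1 + c)^r > n`, so the
balls cannot all grow by a factor `1 + c`: some sphere `L` of radius `i + 1` has at most
`c |W|` vertices, `W` the ball of radius `i`. Deleting `L` traps every vertex of `W` in an SCC
of size at most `|C|/2`, so `lg |SCC(v)|` drops by at least one for each `v ∈ W`. Hence the
deleted vertices are paid for by the potential `Σ_v lg |SCC(v)| ≤ n lg n`, and we recurse.
When `d ≤ 4 lg² n`, deleting every vertex is already good enough.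
-/

variable {V : Type*}

section Partition

variable {E F : V → V → Prop}

open Relation

def ReachIn (E : V → V → Prop) : ℕ → V → V → Prop
  | 0 => Eq
  | k + 1 => fun u v => ∃ w, E u w ∧ ReachIn E k w v

def walkBall (E : V → V → Prop) (u : V) (k : ℕ) : Set V :=
  {v | ∃ j ≤ k, ReachIn E j u v}

def SccDiamLE (E : V → V → Prop) (d : ℕ) : Prop :=
  ∀ v : V, ∀ u₁ ∈ scc E v, ∀ u₂ ∈ scc E v, ddist (induced E (scc E v)) u₁ u₂ ≤ (d : ℕ∞)

noncomputable def logPotential [Fintype V] (E : V → V → Prop) : ℝ :=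
  ∑ v, Real.logb 2 (scc E v).ncard

theorem ReachIn.trans {j k : ℕ} {u w v : V} (h₁ : ReachIn E j u w) (h₂ : ReachIn E k w v) :
    ReachIn E (j + k) u v := by
  induction j generalizing u with
  | zero => cases h₁; simpa using h₂
  | succ j ih =>
    obtain ⟨x, hux, hxw⟩ := h₁
    rw [Nat.add_right_comm]
    exact ⟨x, hux, ih hxw⟩

theorem reachIn_succ_iff' {k : ℕ} {u v : V} :
    ReachIn E (k + 1) u v ↔ ∃ w, ReachIn E k u w ∧ E w v := by
  induction k generalizing u with
  | zero =>
    constructor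
    · rintro ⟨w, huw, rfl⟩; exact ⟨u, rfl, huw⟩
    · rintro ⟨w, rfl, hwv⟩; exact ⟨v, hwv, rfl⟩
  | succ k ih =>
    constructor
    · rintro ⟨x, hux, hxv⟩
      obtain ⟨w, hxw, hwv⟩ := ih.1 hxv
      exact ⟨w, ⟨x, hux, hxw⟩, hwv⟩
    · rintro ⟨w, ⟨x, hux, hxw⟩, hwv⟩
      exact ⟨x, hux, ih.2 ⟨w, hxw, hwv⟩⟩

theorem reachIn_flip {k : ℕ} {u v : V} : ReachIn (flip E) k u v ↔ ReachIn E k v u := by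
  induction k generalizing u v with
  | zero => exact eq_comm
  | succ k ih =>
    rw [reachIn_succ_iff']
    exact ⟨fun ⟨w, huw, hwv⟩ => ⟨w, hwv, ih.1 huw⟩, fun ⟨w, hvw, hwu⟩ => ⟨w, ih.2 hwu, hvw⟩⟩

theorem ReachIn.exists_chain {k : ℕ} {u v : V} (h : ReachIn E k u v) :
    ∃ l : List V, l.IsChain E ∧ l.head? = some u ∧ l.getLast? = some v ∧ l.length = k + 1 := by
  induction k generalizing u with
  | zero => exact ⟨[u], List.isChain_singleton u, rfl, congrArg some (show u = v from h), rfl⟩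
  | succ k ih =>
    obtain ⟨w, huw, hwv⟩ := h
    obtain ⟨l, hl, hhead, hlast, hlen⟩ := ih hwv
    obtain ⟨b, t, rfl⟩ := List.exists_cons_of_length_eq_add_one hlen
    cases hhead
    exact ⟨u :: w :: t, List.isChain_cons_cons.2 ⟨huw, hl⟩, rfl, by rw [← hlast]; rfl,
      by simpa using hlen⟩

theorem ReachIn.ddist_le {k : ℕ} {u v : V} (h : ReachIn E k u v) : ddist E u v ≤ k := by
  obtain ⟨l, hl, hhead, hlast, hlen⟩ := h.exists_chain
  exact sInf_le ⟨l, hl, hhead, hlast, by simp [hlen]⟩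

theorem mem_walkBall_self (E : V → V → Prop) (u : V) (k : ℕ) : u ∈ walkBall E u k :=
  ⟨0, k.zero_le, rfl⟩

theorem walkBall_mono {u : V} {j k : ℕ} (h : j ≤ k) : walkBall E u j ⊆ walkBall E u k :=
  fun _ ⟨i, hi, hv⟩ => ⟨i, hi.trans h, hv⟩

theorem mem_walkBall_succ {u v w : V} {k : ℕ} (hv : v ∈ walkBall E u k) (hvw : E v w) :
    w ∈ walkBall E u (k + 1) := by
  obtain ⟨j, hj, huv⟩ := hv
  exact ⟨j + 1, by omega, reachIn_succ_iff'.2 ⟨v, huv, hvw⟩⟩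

theorem walkBall_induced_subset {C : Set V} {u : V} (hu : u ∈ C) (k : ℕ) :
    walkBall (induced E C) u k ⊆ C := by
  rintro v ⟨_ | j, -, huv⟩
  · exact huv ▸ hu
  · obtain ⟨w, -, hwv⟩ := reachIn_succ_iff'.1 huv
    exact hwv.2.2

theorem disjoint_walkBall_flip {u v : V} {j k : ℕ}
    (hfar : ∀ i ≤ j + k, ¬ ReachIn E i u v) :
    Disjoint (walkBall E u j) (walkBall (flip E) v k) := by
  rw [Set.disjoint_left]
  rintro x ⟨i, hi, hux⟩ ⟨i', hi', hvx⟩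
  exact hfar (i + i') (by omega) (hux.trans (reachIn_flip.1 hvx))

theorem mem_scc_self (E : V → V → Prop) (v : V) : v ∈ scc E v :=
  ⟨ReflTransGen.refl, ReflTransGen.refl⟩

theorem scc_eq_of_mem {u v : V} (h : u ∈ scc E v) : scc E u = scc E v := by
  obtain ⟨huv, hvu⟩ := h
  ext x
  exact ⟨fun ⟨hxu, hux⟩ => ⟨hxu.trans huv, hvu.trans hux⟩,
    fun ⟨hxv, hvx⟩ => ⟨hxv.trans hvu, huv.trans hvx⟩⟩

theorem scc_mono (h : F ≤ E) (v : V) : scc F v ⊆ scc E v :=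
  fun _ ⟨hxv, hvx⟩ => ⟨ReflTransGen.mono h _ _ hxv, ReflTransGen.mono h _ _ hvx⟩

theorem scc_flip (E : V → V → Prop) (v : V) : scc (flip E) v = scc E v := by
  ext x
  exact ⟨fun ⟨hxv, hvx⟩ => ⟨reflTransGen_swap.1 hvx, reflTransGen_swap.1 hxv⟩,
    fun ⟨hxv, hvx⟩ => ⟨reflTransGen_swap.2 hvx, reflTransGen_swap.2 hxv⟩⟩

theorem one_le_ncard_scc [Finite V] (E : V → V → Prop) (v : V) : 1 ≤ (scc E v).ncard :=
  (Set.ncard_pos).2 ⟨v, mem_scc_self E v⟩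

theorem edgesAvoiding_le {S : Set V} : edgesAvoiding E S ≤ E :=
  fun _ _ h => h.1

theorem edgesAvoiding_empty (E : V → V → Prop) : edgesAvoiding E ∅ = E := by
  funext a b
  simp [edgesAvoiding]

theorem edgesAvoiding_union (E : V → V → Prop) (L S : Set V) :
    edgesAvoiding E (L ∪ S) = edgesAvoiding (edgesAvoiding E L) S := by
  funext a b
  simp only [edgesAvoiding, Set.mem_union, eq_iff_iff]
  tauto

theorem edgesAvoiding_flip (E : V → V → Prop) (L : Set V) :
    edgesAvoiding (flip E) L = flip (edgesAvoiding E L) := by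
  funext a b
  simp only [edgesAvoiding, flip, eq_iff_iff]
  tauto

theorem induced_flip (E : V → V → Prop) (C : Set V) :
    induced (flip E) C = flip (induced E C) := by
  funext a b
  simp only [induced, flip, eq_iff_iff]
  tauto

theorem scc_edgesAvoiding_univ (E : V → V → Prop) (v : V) :
    scc (edgesAvoiding E Set.univ) v = {v} := by
  refine Set.eq_singleton_iff_unique_mem.2 ⟨mem_scc_self _ v, fun u hu => ?_⟩
  rcases hu.1.cases_tail with rfl | ⟨w, -, hwv⟩
  · rfl
  · exact (hwv.2.2 trivial).elim

theorem sccDiamLE_of_subsingleton (h : ∀ v, (scc E v).Subsingleton) (d : ℕ) :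
    SccDiamLE E d := by
  intro v u₁ hu₁ u₂ hu₂
  cases h v hu₁ hu₂
  exact (ReachIn.ddist_le (E := induced E (scc E v)) (k := 0) rfl).trans (by simp)

theorem exists_far_pair_of_not_sccDiamLE {d : ℕ} (h : ¬ SccDiamLE E d) :
    ∃ u₁ u₂, u₂ ∈ scc E u₁ ∧ ∀ k ≤ d, ¬ ReachIn (induced E (scc E u₁)) k u₁ u₂ := by
  simp only [SccDiamLE, not_forall, not_le] at h
  obtain ⟨v, u₁, hu₁, u₂, hu₂, hfar⟩ := h
  rw [← scc_eq_of_mem hu₁] at hu₂ hfar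
  exact ⟨u₁, u₂, hu₂, fun k hk hwalk => (hwalk.ddist_le.trans (by exact_mod_cast hk)).not_gt hfar⟩

/-- A cycle through `w` stays inside `scc F u`, where it cannot leave `W` without meeting `L`. -/
theorem scc_edgesAvoiding_subset {u w : V} {L W : Set V} (hW : W ⊆ scc F u)
    (hclosed : ∀ z ∈ W, ∀ y ∈ scc F u, F z y → y ∉ L → y ∈ W) (hw : w ∈ W) :
    scc (edgesAvoiding F L) w ⊆ W := by
  rintro y ⟨hyw, hwy⟩
  suffices ∀ x, ReflTransGen (edgesAvoiding F L) w x → ReflTransGen F x u → x ∈ W from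
    this y hwy ((ReflTransGen.mono edgesAvoiding_le _ _ hyw).trans (hW hw).1)
  intro x hwx
  induction hwx with
  | refl => exact fun _ => hw
  | tail _ hzx ih =>
    intro hxu
    have hz := ih (.head hzx.1 hxu)
    exact hclosed _ hz _ ⟨hxu, (hW hz).2.tail hzx.1⟩ hzx.1 hzx.2.2

theorem exists_succ_le_mul_of_lt_pow {f : ℕ → ℝ} {a : ℝ} {r : ℕ} (ha : 0 ≤ a) (h0 : 1 ≤ f 0)
    (hr : f r < a ^ r) : ∃ i < r, f (i + 1) ≤ a * f i := by
  by_contra! h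
  have hgrow : ∀ i ≤ r, a ^ i ≤ f i := by
    intro i hi
    induction i with
    | zero => simpa using h0
    | succ i ih =>
      rw [pow_succ']
      exact (mul_le_mul_of_nonneg_left (ih (by omega)) ha).trans (h i (by omega)).le
  exact (hgrow r le_rfl).not_gt hr

theorem exists_halving_cut_of_small_ball [Fintype V] {c : ℝ} {r : ℕ} {u : V} (hc : 0 ≤ c)
    (hn : (Fintype.card V : ℝ) < (1 + c) ^ r)
    (hball : 2 * (walkBall (induced F (scc F u)) u r).ncard ≤ (scc F u).ncard) :
    ∃ L W : Set V, u ∈ W ∧ (L.ncard : ℝ) ≤ c * W.ncard ∧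
      ∀ w ∈ W, 2 * (scc (edgesAvoiding F L) w).ncard ≤ (scc F w).ncard := by
  set B := walkBall (induced F (scc F u)) u
  have hBC : ∀ i, B i ⊆ scc F u := walkBall_induced_subset (mem_scc_self F u)
  obtain ⟨i, hir, hi⟩ := exists_succ_le_mul_of_lt_pow (f := fun i => ((B i).ncard : ℝ))
    (by linarith) (by exact_mod_cast (Set.ncard_pos).2 ⟨u, mem_walkBall_self ..⟩)
    ((Nat.cast_le.2 ((Set.ncard_le_card _).trans_eq Nat.card_eq_fintype_card)).trans_lt hn)
  refine ⟨B (i + 1) \ B i, B i, mem_walkBall_self .., ?_, fun w hw => ?_⟩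
  · have := Set.ncard_sdiff_add_ncard_of_subset (walkBall_mono (E := induced F (scc F u))
      (u := u) (Nat.le_succ i))
    have : ((B (i + 1) \ B i).ncard : ℝ) + (B i).ncard = (B (i + 1)).ncard := by
      exact_mod_cast this
    linarith
  · have hclosed : ∀ z ∈ B i, ∀ y ∈ scc F u, F z y → y ∉ B (i + 1) \ B i → y ∈ B i :=
      fun z hz y hy hzy hyL => by
        by_contra hyi
        exact hyL ⟨mem_walkBall_succ hz ⟨hzy, hBC i hz, hy⟩, hyi⟩
    rw [scc_eq_of_mem (hBC i hw)]
    calc 2 * (scc (edgesAvoiding F (B (i + 1) \ B i)) w).ncard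
        ≤ 2 * (B r).ncard := Nat.mul_le_mul_left 2 <| Set.ncard_le_ncard <|
          (scc_edgesAvoiding_subset (hBC i) hclosed hw).trans (walkBall_mono hir.le)
      _ ≤ (scc F u).ncard := hball

theorem exists_halving_cut [Fintype V] {c : ℝ} {d : ℕ} {u₁ u₂ : V} (hc : 0 ≤ c)
    (hn : (Fintype.card V : ℝ) < (1 + c) ^ (d / 2)) (hu₂ : u₂ ∈ scc E u₁)
    (hfar : ∀ k ≤ d, ¬ ReachIn (induced E (scc E u₁)) k u₁ u₂) :
    ∃ L W : Set V, W.Nonempty ∧ (L.ncard : ℝ) ≤ c * W.ncard ∧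
      ∀ w ∈ W, 2 * (scc (edgesAvoiding E L) w).ncard ≤ (scc E w).ncard := by
  set C := scc E u₁
  have hC₂ : scc E u₂ = C := scc_eq_of_mem hu₂
  have hBin : walkBall (flip (induced E C)) u₂ (d / 2) ⊆ C := by
    rw [← induced_flip]
    exact walkBall_induced_subset hu₂ _
  set Bout := walkBall (induced E C) u₁ (d / 2)
  set Bin := walkBall (flip (induced E C)) u₂ (d / 2)
  have hsum : Bout.ncard + Bin.ncard ≤ C.ncard := by
    rw [← Set.ncard_union_eq (disjoint_walkBall_flip fun k hk => hfar k (by omega))]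
    exact Set.ncard_le_ncard (Set.union_subset (walkBall_induced_subset (mem_scc_self E u₁) _) hBin)
  rcases le_total Bout.ncard Bin.ncard with h | h
  · obtain ⟨L, W, hu, hLW, hW⟩ := exists_halving_cut_of_small_ball (F := E) (u := u₁) hc hn
      (by change 2 * Bout.ncard ≤ C.ncard; omega)
    exact ⟨L, W, ⟨u₁, hu⟩, hLW, hW⟩
  · obtain ⟨L, W, hu, hLW, hW⟩ := exists_halving_cut_of_small_ball (F := flip E) (u := u₂) hc hn
      (by rw [scc_flip, hC₂, induced_flip]; change 2 * Bin.ncard ≤ C.ncard; omega)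
    refine ⟨L, W, ⟨u₂, hu⟩, hLW, fun w hw => ?_⟩
    simpa only [edgesAvoiding_flip, scc_flip] using hW w hw

theorem logPotential_le [Fintype V] (E : V → V → Prop) :
    logPotential E ≤ Fintype.card V * Real.logb 2 (Fintype.card V) := by
  rw [← nsmul_eq_mul, ← Finset.card_univ]
  refine Finset.sum_le_card_nsmul _ _ _ fun v _ => ?_
  refine Real.logb_le_logb_of_le one_lt_two (by exact_mod_cast one_le_ncard_scc E v) ?_
  exact_mod_cast (Set.ncard_le_card _).trans_eq Nat.card_eq_fintype_card

theorem logPotential_edgesAvoiding_univ [Fintype V] (E : V → V → Prop) :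
    logPotential (edgesAvoiding E Set.univ) = 0 := by
  simp [logPotential, scc_edgesAvoiding_univ]

theorem ncard_le_logPotential_sub [Fintype V] (hFE : F ≤ E) {W : Set V}
    (hW : ∀ w ∈ W, 2 * (scc F w).ncard ≤ (scc E w).ncard) :
    (W.ncard : ℝ) ≤ logPotential E - logPotential F := by
  classical
  have hpos : ∀ v, (0 : ℝ) < (scc F v).ncard := fun v => by
    exact_mod_cast one_le_ncard_scc F v
  have hmono : ∀ v, Real.logb 2 (scc F v).ncard ≤ Real.logb 2 (scc E v).ncard := fun v =>
    Real.logb_le_logb_of_le one_lt_two (hpos v)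
      (by exact_mod_cast Set.ncard_le_ncard (scc_mono hFE v))
  have hdrop : ∀ v ∈ W, 1 + Real.logb 2 (scc F v).ncard ≤ Real.logb 2 (scc E v).ncard :=
    fun v hv => by
      rw [← Real.logb_self_eq_one one_lt_two, ← Real.logb_mul two_ne_zero (hpos v).ne']
      exact Real.logb_le_logb_of_le one_lt_two (by linarith [hpos v])
        (by exact_mod_cast hW v hv)
  rw [logPotential, logPotential, ← Finset.sum_sub_distrib, Set.ncard_eq_toFinset_card' W]
  calc (W.toFinset.card : ℝ) = ∑ v ∈ W.toFinset, 1 := by simp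
    _ ≤ ∑ v ∈ W.toFinset, (Real.logb 2 (scc E v).ncard - Real.logb 2 (scc F v).ncard) :=
      Finset.sum_le_sum fun v hv => by linarith [hdrop v (Set.mem_toFinset.1 hv)]
    _ ≤ _ := Finset.sum_le_sum_of_subset_of_nonneg (Finset.subset_univ _)
      fun v _ _ => by linarith [hmono v]

theorem sum_ncard_scc_lt [Fintype V] (hFE : F ≤ E) {w : V}
    (hw : 2 * (scc F w).ncard ≤ (scc E w).ncard) :
    ∑ v, (scc F v).ncard < ∑ v, (scc E v).ncard :=
  Finset.sum_lt_sum (fun v _ => Set.ncard_le_ncard (scc_mono hFE v))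
    ⟨w, Finset.mem_univ w, by linarith [one_le_ncard_scc F w]⟩

theorem exists_sccDiamLE_of_lt_pow [Fintype V] {c : ℝ} {d : ℕ} (hc : 0 ≤ c)
    (hn : (Fintype.card V : ℝ) < (1 + c) ^ (d / 2)) (E : V → V → Prop) :
    ∃ S : Set V, SccDiamLE (edgesAvoiding E S) d ∧
      (S.ncard : ℝ) ≤ c * (logPotential E - logPotential (edgesAvoiding E S)) := by
  induction hμ : ∑ v, (scc E v).ncard using Nat.strong_induction_on generalizing E with
  | _ μ ih =>
  by_cases hE : SccDiamLE E d
  · exact ⟨∅, by rwa [edgesAvoiding_empty], by simp [edgesAvoiding_empty]⟩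
  obtain ⟨u₁, u₂, hu₂, hfar⟩ := exists_far_pair_of_not_sccDiamLE hE
  obtain ⟨L, W, ⟨w, hw⟩, hLW, hW⟩ := exists_halving_cut hc hn hu₂ hfar
  obtain ⟨S, hS, hSc⟩ :=
    ih _ (hμ ▸ sum_ncard_scc_lt edgesAvoiding_le (hW w hw)) (edgesAvoiding E L) rfl
  refine ⟨L ∪ S, by rwa [edgesAvoiding_union], ?_⟩
  have hL :=
    hLW.trans (mul_le_mul_of_nonneg_left (ncard_le_logPotential_sub edgesAvoiding_le hW) hc)
  rw [edgesAvoiding_union]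
  calc ((L ∪ S).ncard : ℝ) ≤ L.ncard + S.ncard := by exact_mod_cast Set.ncard_union_le L S
    _ ≤ _ := add_le_add hL hSc
    _ = _ := by ring

theorem card_lt_one_add_pow {n d : ℕ} (hn : 2 ≤ n) (hd : 4 * Real.logb 2 n ^ 2 < d) :
    (n : ℝ) < (1 + 4 * Real.logb 2 n / d) ^ (d / 2) := by
  set ℓ := Real.logb 2 n
  have hn0 : (0 : ℝ) < n := by positivity
  have hℓ : 1 ≤ ℓ := (Real.le_logb_iff_rpow_le one_lt_two hn0).2 (by simpa using hn)
  have hd4 : (4 : ℝ) < d := by nlinarith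
  have hd0 : (0 : ℝ) < d := by linarith
  set c := 4 * ℓ / d
  have hc0 : 0 ≤ c := by positivity
  have hc1 : c ≤ 1 := by rw [div_le_one hd0]; nlinarith
  have hlog : 2 * c / 3 ≤ Real.log (1 + c) := calc
    2 * c / 3 ≤ 2 * c / (c + 2) := div_le_div_of_nonneg_left (by positivity) (by positivity)
      (by linarith)
    _ ≤ _ := Real.le_log_one_add_of_nonneg hc0
  have hr : (d : ℝ) ≤ 2 * (d / 2 : ℕ) + 1 := by exact_mod_cast (by omega : d ≤ 2 * (d / 2) + 1)
  rw [← Real.log_lt_log_iff hn0 (by positivity), Real.log_pow]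
  calc Real.log n = ℓ * Real.log 2 := (div_mul_cancel₀ _ (Real.log_pos one_lt_two).ne').symm
    _ < ℓ := mul_lt_of_lt_one_right (by linarith) (Real.log_two_lt_d9.trans (by norm_num))
    _ ≤ (d / 2 : ℕ) * (2 * c / 3) := by
        rw [show (d / 2 : ℕ) * (2 * c / 3) = 8 * (d / 2 : ℕ) * ℓ / (3 * d) by ring,
          le_div_iff₀ (by positivity)]
        nlinarith
    _ ≤ _ := mul_le_mul_of_nonneg_left hlog (by positivity)

theorem sum_sccs_ncard_mul [Fintype V] (R : V → V → Prop) (g : ℕ → ℝ) :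
    ∑ C ∈ sccs R, (C.ncard : ℝ) * g C.ncard = ∑ v, g (scc R v).ncard := by
  classical
  refine Finset.sum_image' (fun v => g (scc R v).ncard) fun v _ => ?_
  symm
  calc _ = ∑ _w ∈ (scc R v).toFinset, g (scc R v).ncard := by
        refine Finset.sum_congr ?_ fun w hw => by
          rw [scc_eq_of_mem (Set.mem_toFinset.1 hw)]
        ext w
        simpa using ⟨fun h => h ▸ mem_scc_self R w, scc_eq_of_mem⟩
    _ = _ := by rw [Finset.sum_const, ← Set.ncard_eq_toFinset_card', nsmul_eq_mul]

theorem sum_sccs_eq_sub_logPotential [Fintype V] (R : V → V → Prop) :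
    ∑ C ∈ sccs R, (C.ncard : ℝ) *
        (Real.logb 2 (Fintype.card V) - Real.logb 2 C.ncard) =
      Fintype.card V * Real.logb 2 (Fintype.card V) - logPotential R := by
  rw [sum_sccs_ncard_mul R fun k => Real.logb 2 (Fintype.card V) - Real.logb 2 k,
    Finset.sum_sub_distrib, logPotential]
  simp

end Partition

/-- the Partition lemma (existence content). -/
theorem stmt6 {V : Type*} [Fintype V] (E : V → V → Prop) (d : ℕ) (hd : 1 ≤ d) :
    ∃ S : Set V,
      (∀ v : V, ∀ u₁ ∈ scc (edgesAvoiding E S) v, ∀ u₂ ∈ scc (edgesAvoiding E S) v,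
        ddist (induced (edgesAvoiding E S) (scc (edgesAvoiding E S) v)) u₁ u₂ ≤ (d : ℕ∞)) ∧
      (S.ncard : ℝ) ≤ (4 * Real.logb 2 (Fintype.card V) / d) *
        ∑ C ∈ sccs (edgesAvoiding E S),
          (C.ncard : ℝ) * (Real.logb 2 (Fintype.card V) - Real.logb 2 C.ncard) := by
  set n := Fintype.card V
  rcases le_or_gt n 1 with hn | hn
  · have : Subsingleton V := Fintype.card_le_one_iff_subsingleton.1 hn
    refine ⟨∅, sccDiamLE_of_subsingleton (fun v => Set.subsingleton_of_subsingleton) d, ?_⟩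
    have hℓ : Real.logb 2 n = 0 := by
      rcases Nat.le_one_iff_eq_zero_or_eq_one.1 hn with h | h <;> simp [h]
    simp [hℓ]
  have hd0 : (0 : ℝ) < d := by exact_mod_cast hd
  have hℓ0 : 0 ≤ Real.logb 2 n := Real.logb_nonneg one_lt_two (by exact_mod_cast hn.le)
  rcases le_or_gt (d : ℝ) (4 * Real.logb 2 n ^ 2) with hd' | hd'
  · refine ⟨Set.univ, sccDiamLE_of_subsingleton (fun v => by simp [scc_edgesAvoiding_univ]) d, ?_⟩
    rw [sum_sccs_eq_sub_logPotential, logPotential_edgesAvoiding_univ, Set.ncard_univ,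
      Nat.card_eq_fintype_card, div_mul_eq_mul_div, le_div_iff₀ hd0]
    nlinarith
  · obtain ⟨S, hS, hSc⟩ :=
      exists_sccDiamLE_of_lt_pow (by positivity) (card_lt_one_add_pow hn hd') E
    refine ⟨S, hS, ?_⟩
    rw [sum_sccs_eq_sub_logPotential]
    exact hSc.trans (mul_le_mul_of_nonneg_left (by linarith [logPotential_le E]) (by positivity))
end

section
/- Let V be a finite set with n = |V| ≥ 1 elements, let d2 ≥ 0 be a real number, let C_1, …, C_m be pairwise disjoint nonempty subsets of V, and let D_1, …, D_m be nonnegative real numbers such that for each j, either D_j = 0 or there exists i ∈ ℕ with |C_j| > n/2^{i+1} and D_j ≤ d2/2^i. Then Σ_{j=1}^m D_j ≤ 2·d2. -/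
/-- the sum of the diameters of the SCCs in the hierarchical
low-diameter decomposition is at most `2·d2`. -/
theorem stmt11 {V : Type*} [Fintype V] (hn : 1 ≤ Fintype.card V)
    (d2 : ℝ) (hd2 : 0 ≤ d2) (m : ℕ) (C : Fin m → Set V) (D : Fin m → ℝ)
    (hdisj : ∀ i j, i ≠ j → Disjoint (C i) (C j))
    (hne : ∀ j, (C j).Nonempty)
    (hD : ∀ j, 0 ≤ D j)
    (h : ∀ j, D j = 0 ∨ ∃ i : ℕ,
        (Fintype.card V : ℝ) / 2 ^ (i + 1) < ((C j).ncard : ℝ) ∧ D j ≤ d2 / 2 ^ i) :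
    ∑ j, D j ≤ 2 * d2 := by
  classical
  set n : ℝ := (Fintype.card V : ℝ) with hn'
  have hnpos : (0:ℝ) < n := by
    simp only [hn']; exact_mod_cast lt_of_lt_of_le Nat.zero_lt_one hn
  -- key pointwise bound
  have key : ∀ j, D j ≤ (2 * d2 / n) * ((C j).ncard : ℝ) := by
    intro j
    rcases h j with h0 | ⟨i, hcard, hle⟩
    · rw [h0]
      positivity
    · have h2 : (0:ℝ) < 2 ^ i := by positivity
      have : (2 * d2 / n) * (n / 2 ^ (i + 1)) = d2 / 2 ^ i := by
        field_simp; ring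
      calc D j ≤ d2 / 2 ^ i := hle
        _ = (2 * d2 / n) * (n / 2 ^ (i + 1)) := this.symm
        _ ≤ (2 * d2 / n) * ((C j).ncard : ℝ) := by
            apply mul_le_mul_of_nonneg_left hcard.le
            positivity
  -- sum of ncards ≤ card V
  have hF : ∀ j, (C j).Finite := fun j => Set.toFinite _
  have hsum : ∑ j, ((C j).ncard : ℝ) ≤ n := by
    have : ∑ j, (C j).ncard ≤ Fintype.card V := by
      have hcards : ∀ j, (C j).ncard = (hF j).toFinset.card := fun j =>
        Set.ncard_eq_toFinset_card _ (hF j)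
      calc ∑ j, (C j).ncard = ∑ j, (hF j).toFinset.card := by
            simp [hcards]
        _ = (Finset.univ.biUnion fun j => (hF j).toFinset).card := by
            rw [Finset.card_biUnion]
            intro i _ j _ hij
            exact (Set.Finite.disjoint_toFinset).mpr (hdisj i j hij)
        _ ≤ Fintype.card V := Finset.card_le_univ _
    rw [hn']
    exact_mod_cast this
  calc ∑ j, D j ≤ ∑ j, (2 * d2 / n) * ((C j).ncard : ℝ) :=
        Finset.sum_le_sum fun j _ => key j
    _ = (2 * d2 / n) * ∑ j, ((C j).ncard : ℝ) := by rw [Finset.mul_sum]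
    _ ≤ (2 * d2 / n) * n := by
        apply mul_le_mul_of_nonneg_left hsum; positivity
    _ = 2 * d2 := by field_simp
end

section
/- Let G be a digraph on a finite vertex set V such that every vertex of V is reachable from every other (G is strongly connected), let r ∈ V, and let h ∈ ℕ. Then for all u, v ∈ V, d_G(u, v) ≤ 2h + |{x ∈ V : d_G(x, r) > h}| + |{x ∈ V : d_G(r, x) > h}|. -/
variable {V : Type*}

/-!
Go from `u` to `r` and then from `r` to `v`. Along a shortest walk of length `n` into `r`,
every distance `0, 1, …, n` to `r` is realised by some vertex; those realising `h + 1, …, n`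
are distinct and lie at distance `> h`, so `n ≤ h + |{x : d(x, r) > h}|`. Walks out of `r`
are walks into `r` in the reversed digraph.
-/

section Distance

variable {E : V → V → Prop} {u v w : V}

theorem ddist_le_of_isChain {l : List V} (hl : l.IsChain E) (hu : l.head? = some u)
    (hv : l.getLast? = some v) : ddist E u v ≤ (l.length - 1 : ℕ) :=
  sInf_le ⟨l, hl, hu, hv, rfl⟩

theorem exists_isChain_of_ddist_ne_top (h : ddist E u v ≠ ⊤) :
    ∃ l : List V, l.IsChain E ∧ l.head? = some u ∧ l.getLast? = some v ∧
      ddist E u v = (l.length - 1 : ℕ) := by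
  let walks := {n : ℕ∞ | ∃ l : List V, l.IsChain E ∧ l.head? = some u ∧ l.getLast? = some v ∧
    n = ((l.length - 1 : ℕ) : ℕ∞)}
  exact csInf_mem (s := walks)
    (Set.nonempty_iff_ne_empty.2 fun hempty => h ((congrArg sInf hempty).trans sInf_empty))

theorem ddist_ne_top_of_reflTransGen (h : Relation.ReflTransGen E u v) : ddist E u v ≠ ⊤ := by
  obtain ⟨l, hl, hlast⟩ := List.exists_isChain_cons_of_relationReflTransGen h
  refine ne_top_of_le_ne_top (ENat.natCast_ne_top _) (ddist_le_of_isChain hl rfl ?_)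
  rw [List.getLast?_eq_some_getLast (List.cons_ne_nil _ _), hlast]

theorem ddist_le_one_of_rel (h : E u w) : ddist E u w ≤ 1 :=
  ddist_le_of_isChain (l := [u, w]) (List.isChain_pair.2 h) rfl rfl

theorem ddist_triangle (u w v : V) : ddist E u v ≤ ddist E u w + ddist E w v := by
  rcases eq_or_ne (ddist E u w) ⊤ with h₁ | h₁
  · simp [h₁]
  rcases eq_or_ne (ddist E w v) ⊤ with h₂ | h₂
  · simp [h₂]
  obtain ⟨l₁, hc₁, hh₁, hl₁, hd₁⟩ := exists_isChain_of_ddist_ne_top h₁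
  obtain ⟨_ | ⟨x, t⟩, hc₂, hh₂, hl₂, hd₂⟩ := exists_isChain_of_ddist_ne_top h₂
  · simp at hh₂
  obtain rfl : x = w := by simpa using hh₂
  have hne : l₁ ≠ [] := by rintro rfl; simp at hh₁
  have hc : (l₁ ++ t).IsChain E := by
    refine hc₁.append hc₂.tail fun a ha b hb => ?_
    obtain rfl : x = a := by simpa [hl₁] using ha
    exact hc₂.rel_head? hb
  have hl : (l₁ ++ t).getLast? = some v := by
    cases t with
    | nil => simpa [hl₁] using hl₂
    | cons y t => simpa [List.getLast?_append] using hl₂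
  calc ddist E u v ≤ ((l₁ ++ t).length - 1 : ℕ) :=
        ddist_le_of_isChain hc (by simp [List.head?_append, hh₁]) hl
    _ = ddist E u x + ddist E x v := by
        rw [hd₁, hd₂, ← Nat.cast_add, List.length_append, List.length_cons]
        have := List.length_pos_iff.2 hne
        congr 1
        omega

theorem ddist_swap_le : ddist E v u ≤ ddist (Function.swap E) u v :=
  sInf_le_sInf fun _ ⟨l, hl, hu, hv, hn⟩ =>
    ⟨l.reverse, List.isChain_reverse.2 hl, by simpa using hv, by simpa using hu, by simpa using hn⟩

theorem ddist_swap : ddist (Function.swap E) u v = ddist E v u :=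
  le_antisymm (ddist_swap_le (E := Function.swap E)) ddist_swap_le

theorem exists_rel_ddist_eq_of_ddist_eq_succ {n : ℕ} (h : ddist E u v = (n + 1 : ℕ)) :
    ∃ w, E u w ∧ ddist E w v = n := by
  obtain ⟨_ | ⟨x, _ | ⟨w, t⟩⟩, hc, hu, hv, hd⟩ :=
    exists_isChain_of_ddist_ne_top (h ▸ ENat.natCast_ne_top _)
  · simp at hu
  · simp [h] at hd
  obtain rfl : x = u := by simpa using hu
  have huw : E x w := List.rel_of_isChain_cons_cons hc
  have hle : ddist E w v ≤ n := by
    have := ddist_le_of_isChain hc.tail rfl (by simpa using hv)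
    simp_all
  have hge : (n + 1 : ℕ) ≤ 1 + ddist E w v :=
    h ▸ (ddist_triangle x w v).trans (add_le_add_left (ddist_le_one_of_rel huw) _)
  refine ⟨w, huw, le_antisymm hle ?_⟩
  lift ddist E w v to ℕ using ne_top_of_le_ne_top (ENat.natCast_ne_top _) hle with m
  norm_cast at hge ⊢
  omega

theorem exists_ddist_eq_of_le {n k : ℕ} (h : ddist E u v = n) (hk : k ≤ n) :
    ∃ w, ddist E w v = k := by
  induction n generalizing u with
  | zero => exact ⟨u, by rw [h, Nat.le_zero.1 hk]⟩
  | succ n ih =>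
    rcases hk.eq_or_lt with rfl | hlt
    · exact ⟨u, h⟩
    obtain ⟨w, -, hw⟩ := exists_rel_ddist_eq_of_ddist_eq_succ h
    exact ih hw (Nat.le_of_lt_succ hlt)

theorem ddist_le_add_ncard [Finite V] (hu : ddist E u v ≠ ⊤) (h : ℕ) :
    ddist E u v ≤ ((h + {x | (h : ℕ∞) < ddist E x v}.ncard : ℕ) : ℕ∞) := by
  set far := {x | (h : ℕ∞) < ddist E x v}
  lift ddist E u v to ℕ using hu with n hn
  have hsub : Set.Ioc h n ⊆ (fun x => (ddist E x v).toNat) '' far := by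
    rintro k ⟨hhk, hkn⟩
    obtain ⟨w, hw⟩ := exists_ddist_eq_of_le hn.symm hkn
    exact ⟨w, by simp [far, hw, hhk], by simp [hw]⟩
  have hcard : n - h ≤ far.ncard :=
    calc n - h = (Set.Ioc h n).ncard := (Set.ncard_Ioc_nat h n).symm
      _ ≤ ((fun x => (ddist E x v).toNat) '' far).ncard := Set.ncard_le_ncard hsub
      _ ≤ far.ncard := Set.ncard_image_le
  exact_mod_cast (by omega : n ≤ h + far.ncard)

end Distance

/-- diameter bound for a strongly connected digraph via an in-tree and
an out-tree of depth `h` rooted at `r`. -/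
theorem stmt17 {V : Type*} [Fintype V] (E : V → V → Prop)
    (hsc : ∀ u v : V, Relation.ReflTransGen E u v) (r : V) (h : ℕ) :
    ∀ u v : V,
      ddist E u v ≤
        ((2 * h + {x : V | (h : ℕ∞) < ddist E x r}.ncard
          + {x : V | (h : ℕ∞) < ddist E r x}.ncard : ℕ) : ℕ∞) := by
  intro u v
  have hin := ddist_le_add_ncard (ddist_ne_top_of_reflTransGen (hsc u r)) h
  have hout := ddist_le_add_ncard (E := Function.swap E)
    (ddist_ne_top_of_reflTransGen (hsc r v).swap) h
  simp only [ddist_swap] at hout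
  calc ddist E u v ≤ ddist E u r + ddist E r v := ddist_triangle u r v
    _ ≤ _ := add_le_add hin hout
    _ = _ := by push_cast; ring
end
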